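/- For any policy π : S' → Δ(A'), the Q-function Q^{Ξ(π)} of the projected policy in the absorbing-augmented MDP M' is a fixed point of the ζ-constrained Bellman evaluation operator T̃^π on S × A: for all (s,a) ∈ S × A, Q^{Ξ(π)}(s,a) = r(s,a) + γ E_{s'}[Σ_{a'∈A} π(a'|s') ζ(s',a') Q^{Ξ(π)}(s',a')]. -/

import Mathlib

open scoped BigOperators

/-- A finite Markov decision process with transition probabilities `P`,
reward function `r`, discount factor `γ`, and initial distribution `ρ`. -/
structure MDP (S A : Type) [Fintype S] [Fintype A] where
  P : S → A → S → ℝ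
  r : S → A → ℝ
  γ : ℝ
  ρ : S → ℝ

variable {S A : Type} [Fintype S] [Fintype A]

/-- `P` has nonnegative rows summing to one, `ρ` is a distribution, `0 ≤ γ < 1`. -/
def IsValidMDP (M : MDP S A) : Prop :=
  (∀ s a s', 0 ≤ M.P s a s') ∧ (∀ s a, ∑ s' : S, M.P s a s' = 1) ∧
  (∀ s, 0 ≤ M.ρ s) ∧ (∑ s : S, M.ρ s = 1) ∧ 0 ≤ M.γ ∧ M.γ < 1

/-- A (stationary, stochastic) policy. -/
def IsPolicy (π : S → A → ℝ) : Prop :=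
  (∀ s a, 0 ≤ π s a) ∧ ∀ s, ∑ a : A, π s a = 1

/-- Marginal state distribution at step `h` under policy `π`. -/
noncomputable def stateDist (M : MDP S A) (π : S → A → ℝ) : ℕ → S → ℝ
  | 0 => M.ρ
  | h + 1 => fun s' => ∑ s : S, ∑ a : A, stateDist M π h s * π s a * M.P s a s'

/-- Expected discounted return of `π` from the initial distribution. -/
noncomputable def value (M : MDP S A) (π : S → A → ℝ) : ℝ :=
  ∑' h : ℕ, M.γ ^ h * ∑ s : S, ∑ a : A, stateDist M π h s * π s a * M.r s a

/-- State-action distribution at step `h` under `π`, starting from `init`. -/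
noncomputable def saDist (M : MDP S A) (π : S → A → ℝ) (init : S × A → ℝ) :
    ℕ → S × A → ℝ
  | 0 => init
  | h + 1 => fun p => ∑ q : S × A, saDist M π init h q * M.P q.1 q.2 p.1 * π p.1 p.2

open Classical in
/-- Action-value function `Q^π(s,a)`: discounted sum of expected rewards when
starting from the state-action pair `(s, a)` and following `π` afterwards. -/
noncomputable def Qf (M : MDP S A) (π : S → A → ℝ) (s : S) (a : A) : ℝ :=
  ∑' h : ℕ, M.γ ^ h * ∑ p : S × A,
    saDist M π (fun q => if q = (s, a) then 1 else 0) h p * M.r p.1 p.2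

/-- State-value function `V^π(s)`. -/
noncomputable def Vf (M : MDP S A) (π : S → A → ℝ) (s : S) : ℝ :=
  ∑ a : A, π s a * Qf M π s a

/-- The absorbing-augmented MDP `M'`: the extra state `none = s_abs` and extra
action `none = a_abs` give zero reward and lead deterministically to `s_abs`. -/
noncomputable def absorb (M : MDP S A) : MDP (Option S) (Option A) where
  P := fun s a s' =>
    match s, a with
    | some s0, some a0 => (match s' with | some t => M.P s0 a0 t | none => 0)
    | _, _ => (match s' with | none => 1 | some _ => 0)
  r := fun s a =>
    match s, a with
    | some s0, some a0 => M.r s0 a0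
    | _, _ => 0
  γ := M.γ
  ρ := fun s => match s with | some s0 => M.ρ s0 | none => 0

/-- The ζ-constrained policy projection `Ξ`: it keeps the probability
`ζ(s,a)·π(a|s)` on supported actions `a ∈ A` and sends all remaining mass
to the absorbing action `a_abs = none`. -/
noncomputable def proj (ζ : Option S → Option A → ℝ) (π : Option S → Option A → ℝ) :
    Option S → Option A → ℝ :=
  fun s a =>
    match a with
    | some _ => ζ s a * π s a
    | none => ∑ a' : Option A, π s a' * (1 - ζ s a')

/-! The Bellman equation `Q = r + γ P V` holds for the Q-function of any policy in any
valid MDP. In `M'` the absorbing state and action have zero reward and lead to `s_abs`, so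
the Bellman equation gives `V(s_abs) = γ V(s_abs)`, hence `V(s_abs) = 0` and `Q` vanishes
on every pair involving `s_abs` or `a_abs`. The Bellman equation of `M'` at a pair in
`S × A` then loses the absorbing terms, and what is left is the ζ-constrained operator. -/

open Classical in
noncomputable def pointMass (q : S × A) : S × A → ℝ := fun q' => if q' = q then 1 else 0

noncomputable def stepReward (M : MDP S A) (π : S → A → ℝ) (q : S × A) (h : ℕ) : ℝ :=
  ∑ p : S × A, saDist M π (pointMass q) h p * M.r p.1 p.2

omit [Fintype S] [Fintype A] in
lemma pointMass_nonneg (q q' : S × A) : 0 ≤ pointMass q q' := by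
  unfold pointMass; split_ifs <;> norm_num

section Bellman

variable {M : MDP S A} {π : S → A → ℝ}

lemma Qf_eq_tsum_stepReward (s : S) (a : A) :
    Qf M π s a = ∑' h : ℕ, M.γ ^ h * stepReward M π (s, a) h := rfl

lemma saDist_nonneg (hM : IsValidMDP M) (hπ : IsPolicy π) {init : S × A → ℝ}
    (hinit : ∀ q, 0 ≤ init q) (h : ℕ) (p : S × A) : 0 ≤ saDist M π init h p := by
  induction h generalizing p with
  | zero => exact hinit p
  | succ h ih =>
    exact Finset.sum_nonneg fun q _ => mul_nonneg (mul_nonneg (ih q) (hM.1 _ _ _)) (hπ.1 _ _)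

lemma sum_saDist (hM : IsValidMDP M) (hπ : IsPolicy π) (init : S × A → ℝ) (h : ℕ) :
    ∑ p : S × A, saDist M π init h p = ∑ q : S × A, init q := by
  induction h with
  | zero => rfl
  | succ h ih =>
    have hmass : ∀ q : S × A,
        ∑ p : S × A, saDist M π init h q * M.P q.1 q.2 p.1 * π p.1 p.2 = saDist M π init h q := by
      intro q
      simp only [Fintype.sum_prod_type, ← Finset.mul_sum, hπ.2, mul_one, hM.2.1]
    simp only [saDist]
    rw [Finset.sum_comm, ← ih]
    exact Finset.sum_congr rfl fun q _ => hmass q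

lemma saDist_pointMass_le_one (hM : IsValidMDP M) (hπ : IsPolicy π) (q : S × A) (h : ℕ)
    (p : S × A) : saDist M π (pointMass q) h p ≤ 1 := by
  have hnonneg := saDist_nonneg hM hπ (pointMass_nonneg q) h
  calc saDist M π (pointMass q) h p
      ≤ ∑ p' : S × A, saDist M π (pointMass q) h p' :=
        Finset.single_le_sum (fun p' _ => hnonneg p') (Finset.mem_univ p)
    _ = 1 := by simp [sum_saDist hM hπ, pointMass]

lemma abs_stepReward_le (hM : IsValidMDP M) (hπ : IsPolicy π) (q : S × A) (h : ℕ) :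
    |stepReward M π q h| ≤ ∑ p : S × A, |M.r p.1 p.2| := by
  refine (Finset.abs_sum_le_sum_abs _ _).trans (Finset.sum_le_sum fun p _ => ?_)
  rw [abs_mul]
  refine mul_le_of_le_one_left (abs_nonneg _) ?_
  rw [abs_of_nonneg (saDist_nonneg hM hπ (pointMass_nonneg q) h p)]
  exact saDist_pointMass_le_one hM hπ q h p

lemma summable_stepReward (hM : IsValidMDP M) (hπ : IsPolicy π) (q : S × A) :
    Summable fun h : ℕ => M.γ ^ h * stepReward M π q h := by
  have hstep := abs_stepReward_le hM hπ q
  obtain ⟨-, -, -, -, hγ0, hγ1⟩ := hM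
  refine Summable.of_norm_bounded
    ((summable_geometric_of_lt_one hγ0 hγ1).mul_right (∑ p : S × A, |M.r p.1 p.2|)) fun h => ?_
  rw [Real.norm_eq_abs, abs_mul, abs_pow, abs_of_nonneg hγ0]
  exact mul_le_mul_of_nonneg_left (hstep h) (pow_nonneg hγ0 h)

lemma saDist_pointMass_succ (s : S) (a : A) (h : ℕ) (p : S × A) :
    saDist M π (pointMass (s, a)) (h + 1) p
      = ∑ q : S × A, M.P s a q.1 * π q.1 q.2 * saDist M π (pointMass q) h p := by
  induction h generalizing p with
  | zero => simp [saDist, pointMass]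
  | succ h ih =>
    change ∑ x : S × A, saDist M π (pointMass (s, a)) (h + 1) x * M.P x.1 x.2 p.1 * π p.1 p.2
      = ∑ q : S × A, M.P s a q.1 * π q.1 q.2
          * ∑ x : S × A, saDist M π (pointMass q) h x * M.P x.1 x.2 p.1 * π p.1 p.2
    simp only [ih, Finset.sum_mul, Finset.mul_sum]
    rw [Finset.sum_comm]
    exact Finset.sum_congr rfl fun q _ => Finset.sum_congr rfl fun x _ => by ring

lemma stepReward_zero (s : S) (a : A) : stepReward M π (s, a) 0 = M.r s a := by
  simp [stepReward, saDist, pointMass]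

lemma stepReward_succ (s : S) (a : A) (h : ℕ) :
    stepReward M π (s, a) (h + 1)
      = ∑ q : S × A, M.P s a q.1 * π q.1 q.2 * stepReward M π q h := by
  simp only [stepReward, saDist_pointMass_succ, Finset.sum_mul, Finset.mul_sum]
  rw [Finset.sum_comm]
  exact Finset.sum_congr rfl fun q _ => Finset.sum_congr rfl fun p _ => by ring

theorem Qf_eq_bellman (hM : IsValidMDP M) (hπ : IsPolicy π) (s : S) (a : A) :
    Qf M π s a = M.r s a + M.γ * ∑ s' : S, M.P s a s' * Vf M π s' := by
  have hsum := summable_stepReward hM hπ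
  have hshift : ∀ h : ℕ, M.γ ^ (h + 1) * stepReward M π (s, a) (h + 1)
      = ∑ q : S × A, M.γ * (M.P s a q.1 * π q.1 q.2) * (M.γ ^ h * stepReward M π q h) := by
    intro h
    rw [stepReward_succ, Finset.mul_sum]
    exact Finset.sum_congr rfl fun q _ => by ring
  rw [Qf_eq_tsum_stepReward, (hsum (s, a)).tsum_eq_zero_add, pow_zero, one_mul, stepReward_zero]
  simp only [hshift]
  rw [Summable.tsum_finsetSum fun q _ => (hsum q).mul_left _]
  simp only [tsum_mul_left, ← Qf_eq_tsum_stepReward, Vf, Fintype.sum_prod_type, Finset.mul_sum]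
  congr 1
  exact Finset.sum_congr rfl fun s' _ => Finset.sum_congr rfl fun a' _ => by ring

end Bellman

section Absorbing

variable {M : MDP S A}

lemma IsValidMDP.absorb (hM : IsValidMDP M) : IsValidMDP (absorb M) := by
  obtain ⟨hP0, hP1, hρ0, hρ1, hγ0, hγ1⟩ := hM
  refine ⟨?_, ?_, ?_, ?_, hγ0, hγ1⟩
  · rintro (_ | s) (_ | a) (_ | s') <;> simp [_root_.absorb, hP0]
  · rintro (_ | s) (_ | a) <;> simp [_root_.absorb, Fintype.sum_option, hP1]
  · rintro (_ | s) <;> simp [_root_.absorb, hρ0]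
  · simp [_root_.absorb, Fintype.sum_option, hρ1]

omit [Fintype S] in
lemma IsPolicy.proj {ζ : Option S → Option A → ℝ} (hζ01 : ∀ s a, ζ s a = 0 ∨ ζ s a = 1)
    (hζa : ∀ s, ζ s none = 0) {π : Option S → Option A → ℝ} (hπ : IsPolicy π) :
    IsPolicy (proj ζ π) := by
  refine ⟨?_, fun s => ?_⟩
  · rintro s (_ | a)
    · exact Finset.sum_nonneg fun a' _ =>
        mul_nonneg (hπ.1 s a') (by rcases hζ01 s a' with h | h <;> simp [h])
    · exact mul_nonneg (by rcases hζ01 s (some a) with h | h <;> simp [h]) (hπ.1 _ _)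
  · have hmass : ∑ a' : Option A, π s a' * (1 - ζ s a')
        = 1 - ∑ a : A, ζ s (some a) * π s (some a) := by
      simp only [mul_sub, mul_one, Finset.sum_sub_distrib, hπ.2, sub_right_inj]
      rw [Fintype.sum_option, hζa, mul_zero, zero_add]
      exact Finset.sum_congr rfl fun a _ => mul_comm _ _
    rw [Fintype.sum_option]
    simp only [_root_.proj, hmass]
    ring

variable {π : Option S → Option A → ℝ}

lemma Qf_absorb_eq_γ_mul_Vf_none (hM : IsValidMDP M) (hπ : IsPolicy π) {s : Option S}
    {a : Option A} (hsa : s = none ∨ a = none) :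
    Qf (absorb M) π s a = M.γ * Vf (absorb M) π none := by
  rw [Qf_eq_bellman hM.absorb hπ]
  rcases hsa with rfl | rfl
  · cases a <;> simp [absorb, Fintype.sum_option]
  · cases s <;> simp [absorb, Fintype.sum_option]

lemma Vf_absorb_none (hM : IsValidMDP M) (hπ : IsPolicy π) : Vf (absorb M) π none = 0 := by
  have hfix : Vf (absorb M) π none = M.γ * Vf (absorb M) π none := by
    conv_lhs => rw [Vf]
    simp only [Qf_absorb_eq_γ_mul_Vf_none hM hπ (Or.inl rfl), ← Finset.sum_mul, hπ.2, one_mul]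
  have hγ1 : M.γ < 1 := hM.2.2.2.2.2
  nlinarith

lemma Qf_absorb_eq_zero (hM : IsValidMDP M) (hπ : IsPolicy π) {s : Option S} {a : Option A}
    (hsa : s = none ∨ a = none) : Qf (absorb M) π s a = 0 := by
  rw [Qf_absorb_eq_γ_mul_Vf_none hM hπ hsa, Vf_absorb_none hM hπ, mul_zero]

lemma Vf_absorb_some (hM : IsValidMDP M) (hπ : IsPolicy π) (s : S) :
    Vf (absorb M) π (some s)
      = ∑ a : A, π (some s) (some a) * Qf (absorb M) π (some s) (some a) := by
  rw [Vf, Fintype.sum_option, Qf_absorb_eq_zero hM hπ (Or.inr rfl), mul_zero, zero_add]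

lemma Qf_absorb_some_some (hM : IsValidMDP M) (hπ : IsPolicy π) (s : S) (a : A) :
    Qf (absorb M) π (some s) (some a)
      = M.r s a + M.γ * ∑ s' : S, M.P s a s' * Vf (absorb M) π (some s') := by
  rw [Qf_eq_bellman hM.absorb hπ, Fintype.sum_option]
  simp [absorb]

end Absorbing

theorem Qf_proj_fixed_point_general (M : MDP S A) (hM : IsValidMDP M)
    (ζ : Option S → Option A → ℝ)
    (hζ01 : ∀ s a, ζ s a = 0 ∨ ζ s a = 1)
    (hζa : ∀ s, ζ s none = 0)
    (π : Option S → Option A → ℝ) (hπ : IsPolicy π) :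
    ∀ (s : S) (a : A),
      Qf (absorb M) (proj ζ π) (some s) (some a) =
        M.r s a + M.γ * ∑ s' : S, M.P s a s' *
          ∑ a' : A, π (some s') (some a') * ζ (some s') (some a') *
            Qf (absorb M) (proj ζ π) (some s') (some a') := by
  have hΞ : IsPolicy (proj ζ π) := hπ.proj hζ01 hζa
  intro s a
  rw [Qf_absorb_some_some hM hΞ]
  congr 2
  refine Finset.sum_congr rfl fun s' _ => ?_
  rw [Vf_absorb_some hM hΞ]
  congr 1
  exact Finset.sum_congr rfl fun a' _ => by simp only [proj]; ring

/-- The Q-function of the projected policy `Ξ(π)` in the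
absorbing-augmented MDP `M'` is a fixed point of the ζ-constrained Bellman
evaluation operator `T̃^π` on `S × A`. -/
theorem Qf_proj_fixed_point (M : MDP S A) (hM : IsValidMDP M)
    (ζ : Option S → Option A → ℝ)
    (hζ01 : ∀ s a, ζ s a = 0 ∨ ζ s a = 1)
    (hζa : ∀ s, ζ s none = 0) (hζs : ∀ a, ζ none a = 0)
    (π : Option S → Option A → ℝ) (hπ : IsPolicy π) :
    ∀ (s : S) (a : A),
      Qf (absorb M) (proj ζ π) (some s) (some a) =
        M.r s a + M.γ * ∑ s' : S, M.P s a s' *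
          ∑ a' : A, π (some s') (some a') * ζ (some s') (some a') *
            Qf (absorb M) (proj ζ π) (some s') (some a') :=
  Qf_proj_fixed_point_general M hM ζ hζ01 hζa π hπ
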